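/- arXiv:2602.16207 — 3 statements merged into one kernel-verified Lean document; each statement's English description precedes it below -/
import Mathlib

section
/- Suppose there is a chain of subfields 𝔽_q ⊆ 𝔽_{s_0} ⊊ 𝔽_{s_1} ⊊ ⋯ ⊊ 𝔽_{s_ℓ} = 𝔽_{q^m} such that L ⊆ 𝔽_{s_0}, all coefficients of g lie in 𝔽_{s_0}, and η_j ∈ 𝔽_{s_j} ∖ 𝔽_{s_{j−1}} for every 1 ≤ j ≤ ℓ. Then every nonzero codeword of the multi-twisted Goppa code Γ(L, g, 𝕥, 𝕙, η) has Hamming weight at least t + 1; in particular the minimum distance of Γ(L, g, 𝕥, 𝕙, η) is at least t + 1. -/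
open Polynomial

attribute [local instance] Classical.propDecidable

/-- The multi-twisted Goppa code `Γ(L, g, 𝕥, 𝕙, η)` (see paper), with `ℓ = L + 1 ≥ 1`
twists, defined via the syndrome condition in the quotient ring `F[z]/⟨g⟩`. -/
noncomputable def MTGoppa {F : Type*} [Field F] (K : Subfield F) {n : ℕ}
    (α : Fin n → F) (g : F[X]) (t : ℕ) {L : ℕ} (tw hk : Fin (L + 1) → ℕ)
    (η : Fin (L + 1) → F) : Set (Fin n → F) :=
  {c | (∀ i, c i ∈ K) ∧
    ∑ i, (Ideal.Quotient.mk (Ideal.span {g})) (C (c i)) *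
      (Ring.inverse ((Ideal.Quotient.mk (Ideal.span {g})) (X - C (α i))) -
        (Ideal.Quotient.mk (Ideal.span {g}))
          (∑ j, C (η j * α i ^ (t - 1 + tw j) / g.eval (α i)) *
            (g /ₘ X ^ (hk j + 1)))) = 0}

/-!
Both parts of the syndrome are represented by polynomials of degree `< t`: the untwisted part
`A = Σ cᵢ (z - αᵢ)⁻¹` and the twisted part `T = Σⱼ ηⱼ bⱼ g⟨hⱼ⟩` with
`bⱼ = Σ cᵢ αᵢ^(t-1+tⱼ) / g(αᵢ)`, so membership in the code says `A = T` as polynomials.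
The coefficients of `A` and all `bⱼ` lie in `𝔽_{s_0}`. If some `bⱼ ≠ 0`, take the one with the least
`hⱼ`: the coefficient of `z^(t-1-hⱼ)` in `T` is `ηⱼ bⱼ g_t ∉ 𝔽_{s_0}`. Hence `T = 0`, so `c` lies in
the classical Goppa code, and multiplying `Σ cᵢ / (z - αᵢ) ≡ 0` by the locator polynomial of the
support produces a nonzero multiple of `g` of degree less than the weight of `c`.
-/
namespace Polynomial

open Finset Lagrange

theorem coeff_divByMonic_X_pow {R : Type*} [CommRing R] (p : R[X]) (m k : ℕ) :
    (p /ₘ X ^ m).coeff k = p.coeff (k + m) := by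
  nontriviality R
  have hmod : (p %ₘ X ^ m).coeff (k + m) = 0 :=
    coeff_eq_zero_of_degree_lt <| (degree_modByMonic_lt p (monic_X_pow m)).trans_le <| by
      rw [degree_X_pow]; exact_mod_cast Nat.le_add_left m k
  conv_rhs => rw [← modByMonic_add_div p (X ^ m)]
  rw [coeff_add, coeff_X_pow_mul, hmod, zero_add]

theorem eval_mem_of_coeff_mem {R S : Type*} [CommRing R] [SetLike S R] [SubringClass S R]
    {s : S} {p : R[X]} (hp : ∀ k, p.coeff k ∈ s) {a : R} (ha : a ∈ s) : p.eval a ∈ s := by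
  rw [eval_eq_sum_range]
  exact sum_mem fun i _ => mul_mem (hp i) (pow_mem ha i)

theorem ringHom_sum_C_mul_nodal_erase {R A ι : Type*} [CommRing R] [CommRing A] [DecidableEq ι]
    (φ : R[X] →+* A) {s : Finset ι} {v : ι → R} (hv : ∀ i ∈ s, IsUnit (φ (X - C (v i))))
    (c : ι → R) :
    φ (∑ i ∈ s, C (c i) * nodal (s.erase i) v)
      = (∑ i ∈ s, φ (C (c i)) * Ring.inverse (φ (X - C (v i)))) * φ (nodal s v) := by
  rw [map_sum, sum_mul]
  refine sum_congr rfl fun i hi => ?_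
  rw [nodal_eq_mul_nodal_erase hi, map_mul, map_mul, mul_assoc,
    Ring.inverse_mul_cancel_left _ _ (hv i hi)]

variable {F : Type*} [Field F]

-- Since `g /ₘ (X - C a) = (g - g(a)) / (X - a)`, this inverts `X - C a` modulo `g` when `g(a) ≠ 0`.
noncomputable def invXSubCMod (g : F[X]) (a : F) : F[X] :=
  C (-(g.eval a)⁻¹) * (g /ₘ (X - C a))

theorem X_sub_C_mul_invXSubCMod {g : F[X]} {a : F} (ha : g.eval a ≠ 0) :
    (X - C a) * invXSubCMod g a = 1 - C (g.eval a)⁻¹ * g := by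
  have hdiv := modByMonic_add_div g (X - C a)
  rw [modByMonic_X_sub_C_eq_C_eval] at hdiv
  have hinv : C (g.eval a)⁻¹ * C (g.eval a) = 1 := by rw [← C_mul, inv_mul_cancel₀ ha, C_1]
  rw [invXSubCMod, C_neg]
  linear_combination (-C (g.eval a)⁻¹) * hdiv + hinv

theorem mk_X_sub_C_mul_mk_invXSubCMod {g : F[X]} {a : F} (ha : g.eval a ≠ 0) :
    Ideal.Quotient.mk (Ideal.span {g}) (X - C a)
      * Ideal.Quotient.mk (Ideal.span {g}) (invXSubCMod g a) = 1 := by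
  rw [← map_mul, X_sub_C_mul_invXSubCMod ha, map_sub, map_mul,
    Ideal.Quotient.mk_singleton_self, mul_zero, sub_zero, map_one]

theorem ringInverse_mk_X_sub_C {g : F[X]} {a : F} (ha : g.eval a ≠ 0) :
    Ring.inverse (Ideal.Quotient.mk (Ideal.span {g}) (X - C a))
      = Ideal.Quotient.mk (Ideal.span {g}) (invXSubCMod g a) :=
  Ring.inverse_unit (Units.mkOfMulEqOne _ _ (mk_X_sub_C_mul_mk_invXSubCMod ha))

theorem natDegree_invXSubCMod (g : F[X]) (a : F) :
    (invXSubCMod g a).natDegree ≤ g.natDegree - 1 := by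
  refine (natDegree_C_mul_le _ _).trans ?_
  rw [natDegree_divByMonic _ (monic_X_sub_C a), natDegree_X_sub_C]

theorem natDegree_sum_C_mul_invXSubCMod_lt {ι : Type*} (s : Finset ι) {g : F[X]}
    (hg : 0 < g.natDegree) (c a : ι → F) :
    (∑ i ∈ s, C (c i) * invXSubCMod g (a i)).natDegree < g.natDegree :=
  (natDegree_sum_le_of_forall_le _ _ fun i _ => (natDegree_C_mul_le _ _).trans
    (natDegree_invXSubCMod g (a i))).trans_lt (Nat.sub_lt hg one_pos)

theorem coeff_invXSubCMod_mem (S : Subfield F) {g : F[X]} (hg : ∀ k, g.coeff k ∈ S) {a : F}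
    (ha : a ∈ S) (k : ℕ) : (invXSubCMod g a).coeff k ∈ S := by
  rw [invXSubCMod, coeff_C_mul, coeff_divByMonic_X_sub_C]
  exact mul_mem (neg_mem (inv_mem (eval_mem_of_coeff_mem hg ha)))
    (sum_mem fun i _ => mul_mem (pow_mem ha _) (hg i))

theorem natDegree_sum_C_mul_divByMonic_X_pow_lt {ι : Type*} (s : Finset ι) {g : F[X]}
    (hg : 0 < g.natDegree) (b : ι → F) (h : ι → ℕ) :
    (∑ j ∈ s, C (b j) * (g /ₘ X ^ (h j + 1))).natDegree < g.natDegree := by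
  refine (natDegree_sum_le_of_forall_le _ _ fun j _ => (natDegree_C_mul_le _ _).trans ?_).trans_lt
    (Nat.sub_lt hg one_pos)
  rw [natDegree_divByMonic _ (monic_X_pow _), natDegree_X_pow]
  omega

theorem eq_zero_of_coeff_sum_twist_mem {ι : Type*} [Fintype ι] (S : Subfield F) {g : F[X]}
    (hgS : ∀ k, g.coeff k ∈ S) {h : ι → ℕ} (hh : Function.Injective h)
    (hhg : ∀ j, h j < g.natDegree) {η b : ι → F} (hη : ∀ j, η j ∉ S) (hb : ∀ j, b j ∈ S)
    (hT : ∀ k, (∑ j, C (η j * b j) * (g /ₘ X ^ (h j + 1))).coeff k ∈ S) : b = 0 := by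
  by_contra hb0
  obtain ⟨j, hj, hmin⟩ := (univ.filter fun j => b j ≠ 0).exists_min_image h <| by
    simpa [Finset.filter_nonempty_iff, funext_iff] using hb0
  have hbj : b j ≠ 0 := (mem_filter.1 hj).2
  have hg : g.leadingCoeff ≠ 0 := leadingCoeff_ne_zero.2 <| ne_zero_of_natDegree_gt (hhg j)
  -- only the `j`-th twist reaches the coefficient `deg g - 1 - h j`, through the leading coefficient
  have hcoeff : (∑ j, C (η j * b j) * (g /ₘ X ^ (h j + 1))).coeff (g.natDegree - 1 - h j)
      = η j * b j * g.leadingCoeff := by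
    simp only [finsetSum_coeff, coeff_C_mul, coeff_divByMonic_X_pow]
    refine (sum_eq_single j (fun j' _ hj' => ?_) (by simp)).trans ?_
    · by_cases hbj' : b j' = 0
      · simp [hbj']
      have hlt : h j < h j' :=
        (hmin j' (by simpa using hbj')).lt_of_ne (hh.ne (Ne.symm hj'))
      rw [coeff_eq_zero_of_natDegree_lt (by have := hhg j; omega), mul_zero]
    · rw [leadingCoeff, (by have := hhg j; omega : g.natDegree - 1 - h j + (h j + 1) = g.natDegree)]
  refine hη j ?_
  have hmem := div_mem (hT (g.natDegree - 1 - h j))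
    (mul_mem (hb j) (show g.leadingCoeff ∈ S from hgS _))
  rwa [hcoeff, mul_assoc, mul_div_cancel_right₀ _ (mul_ne_zero hbj hg)] at hmem

theorem natDegree_lt_card_support_of_sum_ringInverse_eq_zero {ι : Type*} [Fintype ι]
    [DecidableEq ι] {α : ι → F} (hα : Function.Injective α) {g : F[X]}
    (hgα : ∀ i, g.eval (α i) ≠ 0) {c : ι → F} (hc : c ≠ 0)
    (hsum : ∑ i, Ideal.Quotient.mk (Ideal.span {g}) (C (c i))
      * Ring.inverse (Ideal.Quotient.mk (Ideal.span {g}) (X - C (α i))) = 0) :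
    g.natDegree < #{i | c i ≠ 0} := by
  set s : Finset ι := {i | c i ≠ 0}
  obtain ⟨i₀, hi₀⟩ : s.Nonempty := by simpa [s, Finset.filter_nonempty_iff, funext_iff] using hc
  set R := ∑ i ∈ s, C (c i) * nodal (s.erase i) α
  have hunit : ∀ i ∈ s, IsUnit (Ideal.Quotient.mk (Ideal.span {g}) (X - C (α i))) := fun i _ =>
    IsUnit.of_mul_eq_one _ (mk_X_sub_C_mul_mk_invXSubCMod (hgα i))
  have hgR : g ∣ R := by
    rw [← Ideal.Quotient.eq_zero_iff_dvd, ringHom_sum_C_mul_nodal_erase _ hunit,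
      sum_subset (subset_univ s) fun i _ hi => by simp [not_not.1 (by simpa [s] using hi)],
      hsum, zero_mul]
  have hReval : R.eval (α i₀) = c i₀ * (nodal (s.erase i₀) α).eval (α i₀) := by
    rw [eval_finsetSum, sum_eq_single i₀ (fun i hi hne => ?_) (absurd hi₀), eval_mul, eval_C]
    rw [eval_mul, eval_nodal_at_node (mem_erase.2 ⟨Ne.symm hne, hi₀⟩), mul_zero]
  have hR : R ≠ 0 := fun h0 => mul_ne_zero (mem_filter.1 hi₀).2
    (eval_nodal_not_at_node fun i hi => hα.ne (mem_erase.1 hi).1.symm)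
    (by rw [← hReval, h0, eval_zero])
  have hRdeg : R.natDegree ≤ #s - 1 :=
    natDegree_sum_le_of_forall_le _ _ fun i hi => (natDegree_C_mul_le _ _).trans <| by
      rw [natDegree_nodal, card_erase_of_mem hi]
  have hs := card_pos.2 ⟨i₀, hi₀⟩
  have hgdeg := natDegree_le_of_dvd hgR hR
  omega

theorem eq_of_mk_eq_of_natDegree_lt {g p q : F[X]}
    (h : Ideal.Quotient.mk (Ideal.span {g}) p = Ideal.Quotient.mk (Ideal.span {g}) q)
    (hp : p.natDegree < g.natDegree) (hq : q.natDegree < g.natDegree) : p = q := by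
  rw [Ideal.Quotient.eq, Ideal.mem_span_singleton] at h
  exact sub_eq_zero.1 <| eq_zero_of_dvd_of_natDegree_lt h <|
    (natDegree_sub_le p q).trans_lt (max_lt hp hq)

end Polynomial

open Finset

theorem sum_ringInverse_eq_of_mem_MTGoppa {F : Type*} [Field F] {K : Subfield F} {n : ℕ}
    {α : Fin n → F} {g : F[X]} {t L : ℕ} {tw hk : Fin (L + 1) → ℕ} {η : Fin (L + 1) → F}
    {c : Fin n → F} (hc : c ∈ MTGoppa K α g t tw hk η) :
    ∑ i, Ideal.Quotient.mk (Ideal.span {g}) (C (c i))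
        * Ring.inverse (Ideal.Quotient.mk (Ideal.span {g}) (X - C (α i)))
      = Ideal.Quotient.mk (Ideal.span {g})
          (∑ j, C (η j * ∑ i, c i * α i ^ (t - 1 + tw j) / g.eval (α i))
            * (g /ₘ X ^ (hk j + 1))) := by
  have h := hc.2
  rw [← sub_eq_zero, ← h]
  simp only [mul_sub, sum_sub_distrib, ← map_mul, ← map_sum, sub_right_inj]
  congr 1
  simp only [mul_sum, sum_mul, C_mul, map_sum]
  rw [sum_comm]
  refine sum_congr rfl fun j _ => sum_congr rfl fun i _ => ?_
  simp only [div_eq_mul_inv, C_mul]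
  ring

theorem stmt1_general {F : Type*} [Field F] (K : Subfield F)
    {n : ℕ} (α : Fin n → F) (hα : Function.Injective α)
    (g : F[X]) (t : ℕ) (hgdeg : g.natDegree = t)
    (hgα : ∀ i, g.eval (α i) ≠ 0)
    {L : ℕ} (tw hk : Fin (L + 1) → ℕ)
    (hhkmono : StrictMono hk) (hhkt : ∀ j, hk j < t)
    (η : Fin (L + 1) → F)
    (Sf : Fin (L + 2) → Subfield F)
    (hKS : K ≤ Sf 0)
    (hchain : ∀ j : Fin (L + 1), Sf j.castSucc < Sf j.succ)
    (hLS : ∀ i, α i ∈ Sf 0)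
    (hgS : ∀ k : ℕ, g.coeff k ∈ Sf 0)
    (hηS : ∀ j : Fin (L + 1), η j ∈ Sf j.succ ∧ η j ∉ Sf j.castSucc) :
    ∀ c ∈ MTGoppa K α g t tw hk η, c ≠ 0 →
      t + 1 ≤ (Finset.univ.filter fun i => c i ≠ 0).card := by
  intro c hc hc0
  subst hgdeg
  have hsyn := sum_ringInverse_eq_of_mem_MTGoppa hc
  set b : Fin (L + 1) → F := fun j => ∑ i, c i * α i ^ (g.natDegree - 1 + tw j) / g.eval (α i)
  set T := ∑ j, C (η j * b j) * (g /ₘ X ^ (hk j + 1))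
  have hg : 0 < g.natDegree := (hhkt 0).trans_le' (Nat.zero_le _)
  have hcS : ∀ i, c i ∈ Sf 0 := fun i => hKS (hc.1 i)
  have hA : ∑ i, C (c i) * invXSubCMod g (α i) = T := by
    refine eq_of_mk_eq_of_natDegree_lt ?_ (natDegree_sum_C_mul_invXSubCMod_lt _ hg _ _)
      (natDegree_sum_C_mul_divByMonic_X_pow_lt _ hg _ _)
    simpa only [map_sum, map_mul, ringInverse_mk_X_sub_C (hgα _)] using hsyn
  have hb : b = 0 := by
    refine eq_zero_of_coeff_sum_twist_mem (Sf 0) hgS hhkmono.injective hhkt (η := η)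
      (fun j hj => ?_) (fun j => ?_) fun k => ?_
    · exact (hηS j).2 <| (Fin.strictMono_iff_lt_succ.2 hchain).monotone (Fin.zero_le _) hj
    · exact sum_mem fun i _ => div_mem (mul_mem (hcS i) (pow_mem (hLS i) _))
        (eval_mem_of_coeff_mem hgS (hLS i))
    · change T.coeff k ∈ Sf 0
      rw [← hA, finsetSum_coeff]
      exact sum_mem fun i _ => by
        rw [coeff_C_mul]; exact mul_mem (hcS i) (coeff_invXSubCMod_mem _ hgS (hLS i) k)
  have hweight := natDegree_lt_card_support_of_sum_ringInverse_eq_zero hα hgα hc0 <| by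
    rw [hsyn]; simp [T, hb]
  omega

/-- given a chain of subfields
`𝔽_q ⊆ 𝔽_{s_0} ⊊ 𝔽_{s_1} ⊊ ⋯ ⊊ 𝔽_{s_ℓ} = 𝔽_{q^m}` with `L ⊆ 𝔽_{s_0}`, the
coefficients of `g` in `𝔽_{s_0}`, and `η_j ∈ 𝔽_{s_j} ∖ 𝔽_{s_{j-1}}`, every
nonzero codeword of `Γ(L, g, 𝕥, 𝕙, η)` has Hamming weight at least `t + 1`. -/
theorem stmt1 {F : Type*} [Field F] [Fintype F] (K : Subfield F)
    {n : ℕ} (α : Fin n → F) (hα : Function.Injective α)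
    (g : F[X]) (t : ℕ) (ht : 1 ≤ t) (hgdeg : g.natDegree = t)
    (hgt : g.coeff t ≠ 0) (hgα : ∀ i, g.eval (α i) ≠ 0)
    {L : ℕ} (tw hk : Fin (L + 1) → ℕ)
    (htw1 : ∀ j, 1 ≤ tw j) (htwmono : StrictMono tw)
    (hhkmono : StrictMono hk) (hhkt : ∀ j, hk j < t)
    (η : Fin (L + 1) → F)
    (Sf : Fin (L + 2) → Subfield F)
    (hKS : K ≤ Sf 0)
    (hchain : ∀ j : Fin (L + 1), Sf j.castSucc < Sf j.succ)
    (hSlast : Sf (Fin.last (L + 1)) = ⊤)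
    (hLS : ∀ i, α i ∈ Sf 0)
    (hgS : ∀ k : ℕ, g.coeff k ∈ Sf 0)
    (hηS : ∀ j : Fin (L + 1), η j ∈ Sf j.succ ∧ η j ∉ Sf j.castSucc) :
    ∀ c ∈ MTGoppa K α g t tw hk η, c ≠ 0 →
      t + 1 ≤ (Finset.univ.filter fun i => c i ≠ 0).card :=
  stmt1_general K α hα g t hgdeg hgα tw hk hhkmono hhkt η Sf hKS hchain hLS hgS hηS
end

section
/- With the error vector e of Hamming weight |J| ≤ t/2 and the polynomials σ(x) and τ(x) as defined, for every i ∈ J one has τ(α_i^{−1}) = −g(α_i)^{−1} e_i α_i^{−1} σ′(α_i^{−1}), where σ′ denotes the formal derivative of σ; equivalently, since σ′(α_i^{−1}) ≠ 0, the error magnitude is recovered as e_i = −α_i g(α_i) τ(α_i^{−1}) / σ′(α_i^{−1}). -/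
open Polynomial

attribute [local instance] Classical.propDecidable

variable {F : Type*} [Field F] {n : ℕ}

/-- The support `J` of an error vector `e`. -/
noncomputable def errSupp (e : Fin n → F) : Finset (Fin n) :=
  Finset.univ.filter fun i => e i ≠ 0

/-- The error-locator polynomial `σ(x) = Π_{i∈J} (x - α_i⁻¹)`. -/
noncomputable def errLoc (α e : Fin n → F) : F[X] :=
  ∏ i ∈ errSupp e, (X - C (α i)⁻¹)

/-- The scalar `A = η Σ_{i∈J} α_i^{t-1+t₁} g(α_i)⁻¹ e_i`. -/
noncomputable def twistScalar (α : Fin n → F) (g : F[X]) (t t₁ : ℕ) (η : F)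
    (e : Fin n → F) : F :=
  η * ∑ i ∈ errSupp e, α i ^ (t - 1 + t₁) * (g.eval (α i))⁻¹ * e i

/-- The error-evaluator polynomial
`τ(x) = A·σ(x) - Σ_{i∈J} α_i⁻¹ g(α_i)⁻¹ e_i Π_{j∈J∖{i}} (x - α_j⁻¹)`. -/
noncomputable def errEval (α : Fin n → F) (g : F[X]) (t t₁ : ℕ) (η : F)
    (e : Fin n → F) : F[X] :=
  C (twistScalar α g t t₁ η e) * errLoc α e -
    ∑ i ∈ errSupp e, C ((α i)⁻¹ * (g.eval (α i))⁻¹ * e i) *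
      ∏ j ∈ (errSupp e).erase i, (X - C (α j)⁻¹)

/-- The transformed syndrome polynomial
`s_π(x) = A + Σ_{i∈J} g(α_i)⁻¹ e_i Σ_{l=0}^{t-1} α_i^l x^l`. -/
noncomputable def synPoly (α : Fin n → F) (g : F[X]) (t t₁ : ℕ) (η : F)
    (e : Fin n → F) : F[X] :=
  C (twistScalar α g t t₁ η e) +
    ∑ i ∈ errSupp e, C ((g.eval (α i))⁻¹ * e i) *
      ∑ l ∈ Finset.range t, C (α i ^ l) * X ^ l

/-! The error locator `σ` is the nodal polynomial of the nodes `α_j⁻¹` (`j ∈ J`), and the sum in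
`τ` is a combination of the nodal polynomials of `J ∖ {j}`. At the node `α_i⁻¹` the term `A·σ`
vanishes, every `Π_{k ∈ J∖{j}}` with `j ≠ i` contains the factor `x - α_i⁻¹`, and the surviving
product `Π_{k ∈ J∖{i}} (α_i⁻¹ - α_k⁻¹)` is `σ'(α_i⁻¹)`, which is nonzero because the nodes are
distinct. -/

open Lagrange Finset

theorem Lagrange.eval_sum_C_mul_nodal_erase_at_node {R ι : Type*} [CommRing R] [DecidableEq ι]
    {s : Finset ι} {v : ι → R} {i : ι} (c : ι → R) (hi : i ∈ s) :
    eval (v i) (∑ j ∈ s, C (c j) * nodal (s.erase j) v) =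
      c i * eval (v i) (derivative (nodal s v)) := by
  rw [eval_nodal_derivative_eval_node_eq hi, eval_finsetSum, sum_eq_single_of_mem i hi, eval_mul,
    eval_C]
  intro j _ hji
  rw [eval_mul, eval_nodal_at_node (mem_erase.mpr ⟨Ne.symm hji, hi⟩), mul_zero]

theorem Lagrange.eval_derivative_nodal_ne_zero {K ι : Type*} [Field K] {s : Finset ι}
    {v : ι → K} {i : ι} (hvs : Set.InjOn v s) (hi : i ∈ s) :
    eval (v i) (derivative (nodal s v)) ≠ 0 := by
  classical
  simpa [nodalWeight_eq_eval_derivative_nodal hi] using nodalWeight_ne_zero hvs hi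

theorem errLoc_eq_nodal (α e : Fin n → F) :
    errLoc α e = nodal (errSupp e) fun i => (α i)⁻¹ :=
  rfl

theorem errEval_eq_nodal (α : Fin n → F) (g : F[X]) (t t₁ : ℕ) (η : F) (e : Fin n → F) :
    errEval α g t t₁ η e =
      C (twistScalar α g t t₁ η e) * nodal (errSupp e) (fun j => (α j)⁻¹) -
        ∑ j ∈ errSupp e, C ((α j)⁻¹ * (g.eval (α j))⁻¹ * e j) *
          nodal ((errSupp e).erase j) (fun j => (α j)⁻¹) :=
  rfl

theorem eval_errEval_at_node (α : Fin n → F) (g : F[X]) (t t₁ : ℕ) (η : F) (e : Fin n → F)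
    {i : Fin n} (hi : i ∈ errSupp e) :
    (errEval α g t t₁ η e).eval (α i)⁻¹ =
      -((g.eval (α i))⁻¹ * e i * (α i)⁻¹ * (derivative (errLoc α e)).eval (α i)⁻¹) := by
  rw [errEval_eq_nodal, eval_sub, eval_mul, eval_nodal_at_node (v := fun j => (α j)⁻¹) hi,
    eval_sum_C_mul_nodal_erase_at_node (v := fun j => (α j)⁻¹) _ hi, errLoc_eq_nodal]
  ring

theorem eval_derivative_errLoc_ne_zero {α : Fin n → F} (hα : Function.Injective α)
    (e : Fin n → F) {i : Fin n} (hi : i ∈ errSupp e) :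
    (derivative (errLoc α e)).eval (α i)⁻¹ ≠ 0 :=
  eval_derivative_nodal_ne_zero (v := fun i => (α i)⁻¹)
    (inv_injective.comp hα).injOn hi

theorem stmt5_general (α : Fin n → F)
    (hα : Function.Injective α) (hα0 : ∀ i, α i ≠ 0)
    (g : F[X]) (t : ℕ)
    (hgα : ∀ i, g.eval (α i) ≠ 0) (t₁ : ℕ) (η : F)
    (e : Fin n → F) :
    ∀ i ∈ errSupp e,
      (errEval α g t t₁ η e).eval ((α i)⁻¹) =
        -((g.eval (α i))⁻¹ * e i * (α i)⁻¹ *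
          (Polynomial.derivative (errLoc α e)).eval ((α i)⁻¹)) ∧
      (Polynomial.derivative (errLoc α e)).eval ((α i)⁻¹) ≠ 0 ∧
      e i = -(α i * g.eval (α i) * (errEval α g t t₁ η e).eval ((α i)⁻¹) /
        (Polynomial.derivative (errLoc α e)).eval ((α i)⁻¹)) := by
  intro i hi
  have hτ := eval_errEval_at_node α g t t₁ η e hi
  have hσ' := eval_derivative_errLoc_ne_zero hα e hi
  refine ⟨hτ, hσ', ?_⟩
  rw [hτ, mul_neg, neg_div, neg_neg, eq_div_iff hσ']
  field_simp [hα0 i, hgα i]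

/-- for every `i ∈ J`,
`τ(α_i⁻¹) = -g(α_i)⁻¹ e_i α_i⁻¹ σ'(α_i⁻¹)`; moreover `σ'(α_i⁻¹) ≠ 0`, so that
the error magnitude is recovered as `e_i = -α_i g(α_i) τ(α_i⁻¹) / σ'(α_i⁻¹)`. -/
theorem stmt5 [Fintype F] (K : Subfield F) (α : Fin n → F)
    (hα : Function.Injective α) (hα0 : ∀ i, α i ≠ 0)
    (g : F[X]) (t : ℕ) (ht : 1 ≤ t) (hgdeg : g.natDegree = t)
    (hgα : ∀ i, g.eval (α i) ≠ 0) (t₁ : ℕ) (ht₁ : 1 ≤ t₁) (η : F)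
    (e : Fin n → F) (heK : ∀ i, e i ∈ K)
    (hw : 2 * (errSupp e).card ≤ t) :
    ∀ i ∈ errSupp e,
      (errEval α g t t₁ η e).eval ((α i)⁻¹) =
        -((g.eval (α i))⁻¹ * e i * (α i)⁻¹ *
          (Polynomial.derivative (errLoc α e)).eval ((α i)⁻¹)) ∧
      (Polynomial.derivative (errLoc α e)).eval ((α i)⁻¹) ≠ 0 ∧
      e i = -(α i * g.eval (α i) * (errEval α g t t₁ η e).eval ((α i)⁻¹) /
        (Polynomial.derivative (errLoc α e)).eval ((α i)⁻¹)) :=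
  stmt5_general α hα hα0 g t hgα t₁ η e
end

section
/- Let t := deg G(x) be even and suppose σ(x), τ(x) ∈ F[x] ∖ {0} satisfy: (i) σ(x) S(x) ≡ τ(x) (mod G(x)); (ii) gcd(σ(x), τ(x)) = 1; (iii) deg τ(x) ≤ deg σ(x) = t/2. If σ_i(x) and τ_i(x), for i ∈ {−1, 0, …, κ+1}, are the polynomials obtained from the extended Euclidean algorithm applied to (G(x), S(x)), and ν is the least index such that deg τ_ν(x) < t/2, then there exist μ_1 ∈ F and μ_2 ∈ F ∖ {0} such that σ(x) = μ_1 σ_{ν−1}(x) + μ_2 σ_ν(x) and τ(x) = μ_1 τ_{ν−1}(x) + μ_2 τ_ν(x). Moreover, if in (iii) one has deg τ(x) < deg σ(x) = t/2, then μ_1 = 0. -/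
/-!
Both `(σ_ν₋₁, τ_ν₋₁)` and `(σ_ν, τ_ν)` satisfy the congruence `σ S ≡ τ (mod G)`, and their
determinant `τ_ν₋₁ σ_ν - τ_ν σ_ν₋₁` is `±G`. By Cramer's rule every solution `(σ, τ)` of the
congruence is a polynomial combination `a (σ_ν₋₁, τ_ν₋₁) + b (σ_ν, τ_ν)` with
`±G a = τ σ_ν - σ τ_ν`. Since `deg σ_ν = t - deg τ_ν₋₁ ≤ t/2` and `deg τ_ν < t/2`, the right-hand
side has degree at most `t`, with strict inequality when `deg τ < t/2`; so `a` is a constant,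
zero in the strict case. Comparing degrees in `σ = a σ_ν₋₁ + b σ_ν` gives
`deg b = deg τ_ν₋₁ - t/2`; if `a = 0` then `b` divides both `σ` and `τ`, hence is a unit, and
otherwise `deg τ = deg τ_ν₋₁ ≤ t/2`. Either way `b` is a nonzero constant.
-/

open Polynomial

/-- Data produced by the extended Euclidean algorithm applied to polynomials
`G` and `S` over a field, with `G ≠ 0` and `deg S < deg G`.  Indices are
shifted by one relative to the paper: `T k`, `U k`, `V k`, `Q k` correspond to
`τ_{k-1}`, `u_{k-1}`, `σ_{k-1}`, `q_{k-1}` respectively, so `T 0 = τ_{-1} = G`,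
`T 1 = τ_0 = S`, etc.  `κ` is the largest (paper) index with `τ_κ ≠ 0`, i.e.
`T (κ+1) ≠ 0` and `T (κ+2) = 0`. -/
structure EEAData (F : Type*) [Field F] (G S : Polynomial F) where
  T : ℕ → Polynomial F
  U : ℕ → Polynomial F
  V : ℕ → Polynomial F
  Q : ℕ → Polynomial F
  κ : ℕ
  hT0 : T 0 = G
  hT1 : T 1 = S
  hU0 : U 0 = 1
  hU1 : U 1 = 0
  hV0 : V 0 = 0
  hV1 : V 1 = 1
  hrec : ∀ k : ℕ, 2 ≤ k → k ≤ κ + 2 →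
    T (k - 2) = Q k * T (k - 1) + T k ∧
    (T k).degree < (T (k - 1)).degree ∧
    U k = U (k - 2) - Q k * U (k - 1) ∧
    V k = V (k - 2) - Q k * V (k - 1)
  hκ₁ : T (κ + 1) ≠ 0
  hκ₂ : T (κ + 2) = 0

namespace Polynomial

variable {F : Type*} [Field F]

theorem exists_eq_C_of_isCoprime_of_eq_C_mul_add {a : F} {b v₀ v₁ t₀ t₁ σ τ : F[X]} {m : ℕ}
    (hσ : σ = C a * v₀ + b * v₁) (hτ : τ = C a * t₀ + b * t₁) (hcop : IsCoprime σ τ)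
    (hσ₀ : σ ≠ 0) (hσm : σ.natDegree = m) (hτm : τ.natDegree ≤ m) (hv₀ : v₀.degree < m)
    (hv₁t₀ : v₁.natDegree + t₀.natDegree = m + m) (ht₁ : t₁.natDegree < m) :
    ∃ μ : F, μ ≠ 0 ∧ b = C μ := by
  have hdeg : (b * v₁).degree = σ.degree := by
    have hlt : (C a * v₀).degree < σ.degree := by
      rw [← smul_eq_C_mul, degree_eq_natDegree hσ₀, hσm]
      exact (degree_smul_le a v₀).trans_lt hv₀
    rw [eq_sub_of_add_eq' hσ.symm]
    exact degree_sub_eq_left_of_degree_lt hlt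
  have hbv₁ : b * v₁ ≠ 0 := by
    rw [← degree_ne_bot, hdeg, degree_ne_bot]
    exact hσ₀
  have hb : b ≠ 0 := left_ne_zero_of_mul hbv₁
  have hbm : b.natDegree + v₁.natDegree = m := by
    rw [← natDegree_mul hb (right_ne_zero_of_mul hbv₁), natDegree_eq_of_degree_eq hdeg, hσm]
  suffices b.natDegree = 0 from
    ⟨b.coeff 0, fun h ↦ hb (by rw [eq_C_of_natDegree_eq_zero this, h, C_0]),
      eq_C_of_natDegree_eq_zero this⟩
  rcases eq_or_ne a 0 with rfl | ha
  · rw [C_0, zero_mul, zero_add] at hσ hτ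
    exact natDegree_eq_zero_of_isUnit
      (hcop.isUnit_of_dvd' (hσ ▸ dvd_mul_right _ _) (hτ ▸ dvd_mul_right _ _))
  · have hlt : (b * t₁).natDegree < (C a * t₀).natDegree := by
      rw [natDegree_C_mul ha]
      exact natDegree_mul_le.trans_lt (by omega)
    rw [hτ, natDegree_add_eq_left_of_natDegree_lt hlt, natDegree_C_mul ha] at hτm
    omega

end Polynomial

namespace EEAData

variable {F : Type*} [Field F] {G S : F[X]} (E : EEAData F G S)

theorem rec_add_two {k : ℕ} (hk : k + 2 ≤ E.κ + 2) :
    E.T k = E.Q (k + 2) * E.T (k + 1) + E.T (k + 2) ∧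
      (E.T (k + 2)).degree < (E.T (k + 1)).degree ∧
      E.V (k + 2) = E.V k - E.Q (k + 2) * E.V (k + 1) :=
  let ⟨hT, hdeg, _, hV⟩ := E.hrec (k + 2) (by omega) hk
  ⟨hT, hdeg, hV⟩

theorem degree_T_succ_lt (hS : S.degree < G.degree) {k : ℕ} (hk : k + 1 ≤ E.κ + 2) :
    (E.T (k + 1)).degree < (E.T k).degree := by
  rcases k with _ | k
  · rwa [E.hT0, E.hT1]
  · exact (E.rec_add_two hk).2.1

theorem T_ne_zero (hG : G ≠ 0) {k : ℕ} (hk : k ≤ E.κ + 1) : E.T k ≠ 0 := by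
  rcases k with _ | k
  · rwa [E.hT0]
  · intro h
    have hlt := (E.rec_add_two (k := k) (by omega)).2.1
    rw [h, degree_zero] at hlt
    exact not_lt_bot hlt

theorem dvd_V_mul_sub_T {k : ℕ} (hk : k ≤ E.κ + 2) : G ∣ E.V k * S - E.T k := by
  induction k using Nat.twoStepInduction with
  | zero => simp [E.hV0, E.hT0]
  | one => simp [E.hV1, E.hT1]
  | more k ih₀ ih₁ =>
    obtain ⟨hT, -, hV⟩ := E.rec_add_two hk
    convert dvd_sub (ih₀ (by omega)) (dvd_mul_of_dvd_right (ih₁ (by omega)) (E.Q (k + 2)))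
      using 1
    rw [hV]
    linear_combination hT

theorem T_mul_V_succ_sub {k : ℕ} (hk : k + 1 ≤ E.κ + 2) :
    E.T k * E.V (k + 1) - E.T (k + 1) * E.V k = (-1) ^ k * G := by
  induction k with
  | zero => simp [E.hT0, E.hT1, E.hV0, E.hV1]
  | succ k ih =>
    obtain ⟨hT, -, hV⟩ := E.rec_add_two hk
    rw [hV]
    linear_combination -ih (by omega) + E.V (k + 1) * hT

theorem Q_ne_zero_and_natDegree_add (hG : G ≠ 0) (hS : S.degree < G.degree) {k : ℕ}
    (hk : k + 2 ≤ E.κ + 2) :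
    E.Q (k + 2) ≠ 0 ∧
      (E.Q (k + 2)).natDegree + (E.T (k + 1)).natDegree = (E.T k).natDegree := by
  obtain ⟨hT, hlt, -⟩ := E.rec_add_two hk
  have hQT : (E.Q (k + 2) * E.T (k + 1)).degree = (E.T k).degree := by
    rw [eq_sub_of_add_eq hT.symm]
    exact degree_sub_eq_left_of_degree_lt (hlt.trans (E.degree_T_succ_lt hS (by omega)))
  have hQ : E.Q (k + 2) ≠ 0 := by
    rintro h
    rw [h, zero_mul, degree_zero] at hQT
    exact E.T_ne_zero hG (k := k) (by omega) (degree_eq_bot.1 hQT.symm)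
  refine ⟨hQ, ?_⟩
  rw [← natDegree_mul hQ (E.T_ne_zero hG (by omega)), natDegree_eq_of_degree_eq hQT]

theorem V_succ_ne_zero_and_degree_lt_and_natDegree_add (hG : G ≠ 0) (hS : S.degree < G.degree)
    {k : ℕ} (hk : k + 1 ≤ E.κ + 2) :
    E.V (k + 1) ≠ 0 ∧ (E.V k).degree < (E.V (k + 1)).degree ∧
      (E.V (k + 1)).natDegree + (E.T k).natDegree = G.natDegree := by
  induction k with
  | zero => simp [E.hV0, E.hV1, E.hT0]
  | succ k ih =>
    rw [show k + 1 + 1 = k + 2 from rfl]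
    obtain ⟨hV₁, hlt, hsum⟩ := ih (by omega)
    obtain ⟨hQ, hQT⟩ := E.Q_ne_zero_and_natDegree_add hG hS hk
    have hT := natDegree_lt_natDegree (E.T_ne_zero hG (k := k + 1) (by omega))
      (E.degree_T_succ_lt hS (k := k) (by omega))
    have hQV : (E.V (k + 2)).degree = (E.Q (k + 2) * E.V (k + 1)).degree := by
      rw [(E.rec_add_two hk).2.2]
      refine degree_sub_eq_right_of_degree_lt (hlt.trans_le ?_)
      rw [mul_comm]
      exact degree_le_mul_left _ hQ
    have hV₂ : E.V (k + 2) ≠ 0 := by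
      rw [← degree_ne_bot, hQV, degree_ne_bot]
      exact mul_ne_zero hQ hV₁
    have hnat :
        (E.V (k + 2)).natDegree = (E.Q (k + 2)).natDegree + (E.V (k + 1)).natDegree := by
      rw [natDegree_eq_of_degree_eq hQV, natDegree_mul hQ hV₁]
    refine ⟨hV₂, ?_, by omega⟩
    rw [degree_eq_natDegree hV₁, degree_eq_natDegree hV₂]
    exact_mod_cast (by omega : (E.V (k + 1)).natDegree < (E.V (k + 2)).natDegree)

theorem exists_eq_mul_V_add_mul_V (hG : G ≠ 0) {k : ℕ} (hk : k + 1 ≤ E.κ + 2) {σ τ : F[X]}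
    (hkey : G ∣ σ * S - τ) :
    ∃ a b : F[X], σ = a * E.V k + b * E.V (k + 1) ∧ τ = a * E.T k + b * E.T (k + 1) ∧
      G * a = C ((-1) ^ k) * (τ * E.V (k + 1) - σ * E.T (k + 1)) := by
  have hdet := E.T_mul_V_succ_sub hk
  obtain ⟨c₀, hc₀⟩ : G ∣ σ * E.T k - τ * E.V k := by
    convert dvd_sub (dvd_mul_of_dvd_right hkey (E.V k))
      (dvd_mul_of_dvd_right (E.dvd_V_mul_sub_T (k := k) (by omega)) σ) using 1
    ring
  obtain ⟨c₁, hc₁⟩ : G ∣ σ * E.T (k + 1) - τ * E.V (k + 1) := by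
    convert dvd_sub (dvd_mul_of_dvd_right hkey (E.V (k + 1)))
      (dvd_mul_of_dvd_right (E.dvd_V_mul_sub_T hk) σ) using 1
    ring
  have hsign : C ((-1 : F) ^ k) = (-1) ^ k := by simp
  have hsq : ((-1 : F[X]) ^ k) * (-1) ^ k = 1 := by rw [← mul_pow]; simp
  -- Cramer's rule for the system with determinant `(-1) ^ k * G`.
  refine ⟨-C ((-1) ^ k) * c₁, C ((-1) ^ k) * c₀, ?_, ?_, ?_⟩
  · apply mul_left_cancel₀ hG
    rw [hsign]
    linear_combination (-1) ^ k * (E.V (k + 1) * hc₀ - E.V k * hc₁) - (-1) ^ k * σ * hdet -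
      σ * G * hsq
  · apply mul_left_cancel₀ hG
    rw [hsign]
    linear_combination (-1) ^ k * (E.T (k + 1) * hc₀ - E.T k * hc₁) - (-1) ^ k * τ * hdet -
      τ * G * hsq
  · rw [hsign]
    linear_combination (-1) ^ k * hc₁

theorem exists_C_mul_V_add_C_mul_V (hG : G ≠ 0) (hS : S.degree < G.degree) {n m : ℕ}
    (hn : n + 1 ≤ E.κ + 2) (hGm : G.natDegree = m + m) (hTn : m ≤ (E.T n).natDegree)
    (hTn₁ : (E.T (n + 1)).natDegree < m) {σ τ : F[X]} (hσ : σ ≠ 0) (hkey : G ∣ σ * S - τ)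
    (hcop : IsCoprime σ τ) (hσm : σ.natDegree = m) (hτm : τ.natDegree ≤ m) :
    ∃ μ₁ μ₂ : F, μ₂ ≠ 0 ∧ σ = C μ₁ * E.V n + C μ₂ * E.V (n + 1) ∧
      τ = C μ₁ * E.T n + C μ₂ * E.T (n + 1) ∧ (τ.natDegree < m → μ₁ = 0) := by
  obtain ⟨a, b, hσab, hτab, hGa⟩ := E.exists_eq_mul_V_add_mul_V hG hn hkey
  obtain ⟨-, hVlt, hVT⟩ := E.V_succ_ne_zero_and_degree_lt_and_natDegree_add hG hS hn
  have hV : (E.V (n + 1)).natDegree ≤ m := by omega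
  have hGa_le (ha : a ≠ 0) :
      m + m + a.natDegree ≤ max (τ.natDegree + m) (m + (E.T (n + 1)).natDegree) := by
    rw [← hGm, ← natDegree_mul hG ha, hGa, natDegree_C_mul (by simp)]
    exact natDegree_sub_le_of_le (natDegree_mul_le_of_le le_rfl hV)
      (natDegree_mul_le_of_le hσm.le le_rfl)
  have ha : a.natDegree = 0 := by
    by_cases ha : a = 0
    · rw [ha, natDegree_zero]
    · have := hGa_le ha
      omega
  obtain ⟨μ₁, rfl⟩ : ∃ μ₁, a = C μ₁ := ⟨_, eq_C_of_natDegree_eq_zero ha⟩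
  obtain ⟨μ₂, hμ₂, rfl⟩ := exists_eq_C_of_isCoprime_of_eq_C_mul_add hσab hτab hcop hσ hσm hτm
    (hVlt.trans_le (degree_le_of_natDegree_le hV)) (by omega) hTn₁
  refine ⟨μ₁, μ₂, hμ₂, hσab, hτab, fun hτ ↦ ?_⟩
  by_contra hμ₁
  have := hGa_le (C_ne_zero.2 hμ₁)
  omega

end EEAData

theorem stmt10_general {F : Type*} [Field F] (G S : Polynomial F)
    (hG : G ≠ 0) (hS : S.degree < G.degree) (E : EEAData F G S)
    (hEven : Even G.natDegree)
    (σ τ : Polynomial F) (hσ : σ ≠ 0)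
    (hkey : G ∣ σ * S - τ)
    (hcop : IsCoprime σ τ)
    (hτσ : τ.natDegree ≤ σ.natDegree)
    (hσdeg : σ.natDegree = G.natDegree / 2)
    (N : ℕ)
    (hNlt : 2 * (E.T N).natDegree < G.natDegree)
    (hNleast : ∀ k < N, ¬ 2 * (E.T k).natDegree < G.natDegree) :
    ∃ μ₁ μ₂ : F, μ₂ ≠ 0 ∧
      σ = Polynomial.C μ₁ * E.V (N - 1) + Polynomial.C μ₂ * E.V N ∧
      τ = Polynomial.C μ₁ * E.T (N - 1) + Polynomial.C μ₂ * E.T N ∧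
      (τ.natDegree < σ.natDegree → μ₁ = 0) := by
  obtain ⟨m, hm⟩ := hEven
  have hN₀ : N ≠ 0 := by
    rintro rfl
    rw [E.hT0] at hNlt
    omega
  have hNκ : N ≤ E.κ + 2 := by
    by_contra! h
    exact hNleast _ h (by rw [E.hκ₂, natDegree_zero]; omega)
  obtain ⟨n, rfl⟩ : ∃ n, N = n + 1 := ⟨N - 1, by omega⟩
  have hTn := hNleast n n.lt_succ_self
  obtain ⟨μ₁, μ₂, hμ₂, hσV, hτT, hμ₁⟩ := E.exists_C_mul_V_add_C_mul_V hG hS hNκ hm (by omega)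
    (by omega) hσ hkey hcop (by omega) (by omega)
  exact ⟨μ₁, μ₂, hμ₂, hσV, hτT, fun h ↦ hμ₁ (by omega)⟩

/-- the boundary case `deg σ = t/2` with `t = deg G` even.
If `σ, τ ≠ 0` satisfy `σ S ≡ τ (mod G)`, `gcd(σ, τ) = 1` and
`deg τ ≤ deg σ = t/2`, and `N` is the least (shifted) index with
`deg τ_N < t/2` (here `deg p < t/2` is expressed as `2 * deg p < t`, valid also
for `p = 0`), then `σ = μ₁ σ_{N-1} + μ₂ σ_N` and `τ = μ₁ τ_{N-1} + μ₂ τ_N` for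
some `μ₁ ∈ F` and `μ₂ ∈ F ∖ {0}`; moreover if `deg τ < deg σ` then `μ₁ = 0`. -/
theorem stmt10 {F : Type*} [Field F] (G S : Polynomial F)
    (hG : G ≠ 0) (hS : S.degree < G.degree) (E : EEAData F G S)
    (hEven : Even G.natDegree)
    (σ τ : Polynomial F) (hσ : σ ≠ 0) (hτ : τ ≠ 0)
    (hkey : G ∣ σ * S - τ)
    (hcop : IsCoprime σ τ)
    (hτσ : τ.natDegree ≤ σ.natDegree)
    (hσdeg : σ.natDegree = G.natDegree / 2)
    (N : ℕ)
    (hNlt : 2 * (E.T N).natDegree < G.natDegree)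
    (hNleast : ∀ k < N, ¬ 2 * (E.T k).natDegree < G.natDegree) :
    ∃ μ₁ μ₂ : F, μ₂ ≠ 0 ∧
      σ = Polynomial.C μ₁ * E.V (N - 1) + Polynomial.C μ₂ * E.V N ∧
      τ = Polynomial.C μ₁ * E.T (N - 1) + Polynomial.C μ₂ * E.T N ∧
      (τ.natDegree < σ.natDegree → μ₁ = 0) :=
  stmt10_general G S hG hS E hEven σ τ hσ hkey hcop hτσ hσdeg N hNlt hNleast
end
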